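/- arXiv:2604.19924 — 4 statements merged into one kernel-verified Lean document; each statement's English description precedes it below -/
import Mathlib

section
/- Let W : ℝ → [0,∞) be continuous on [0,∞), vanishing on (-∞,0), nondecreasing, and let h : ℝ → [0,∞) be locally bounded and nonnegative on [0, T-y]. Let μ be a nonnegative Radon measure on [y,T] with inf_{x∈[y,T]}(1 - W(0)μ{x}) > 0. Then the unique locally bounded solution H of H(x) = h(x-y) + ∫_{[y,x]} W(x-z) H(z) μ(dz), x ∈ [y,T], satisfies H(x) ≥ 0 for all x ∈ [y,T]. -/
/-!
Write `N = H⁻`. Evaluating the equation at `x`, dropping `h ≥ 0` and splitting off the atom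
of `μ` at `x` gives `ε N(x) ≤ ∫_{[y,x)} W(x-z) N(z) μ(dz)`, with `W(x-z) ≤ W(T-y)`. If `N` did
not vanish on `[y,T]`, let `s` be the infimum of the points where it does not. The inequality
first forces `N(s) = 0`; then on a short interval `(s,b]` with `W(T-y) μ(s,b] < ε/2` it bounds
`N` by half its own supremum there, so `N` vanishes up to `b`, a contradiction.
`H` need not be measurable, so the integral inequalities below are proved so as to survive
the junk value `0` of a non-integrable integrand.
-/

open MeasureTheory Filter Set Topology

theorem negPart_mul_of_nonneg {R : Type*} [Ring R] [LinearOrder R] [IsOrderedRing R] {w : R}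
    (hw : 0 ≤ w) (v : R) : (w * v)⁻ = w * v⁻ := by
  rw [negPart_def, negPart_def, mul_max_of_nonneg _ _ hw, mul_zero, mul_neg]

theorem neg_integral_le_integral_negPart {α : Type*} [MeasurableSpace α] (μ : Measure α)
    (f : α → ℝ) : -∫ a, f a ∂μ ≤ ∫ a, (f a)⁻ ∂μ := by
  by_cases hf : Integrable f μ
  · rw [← integral_neg]
    exact integral_mono hf.neg hf.neg_part fun a => neg_le_negPart (f a)
  · rw [integral_undef hf, neg_zero]
    exact integral_nonneg fun a => negPart_nonneg _

theorem setIntegral_Icc_le_Ico_add {α : Type*} [LinearOrder α] [MeasurableSpace α]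
    [MeasurableSingletonClass α] (μ : Measure α) {g : α → ℝ} (hg : ∀ z, 0 ≤ g z) {a b : α}
    (hab : a ≤ b) : ∫ z in Icc a b, g z ∂μ ≤ ∫ z in Ico a b, g z ∂μ + μ.real {b} * g b := by
  by_cases hint : IntegrableOn g (Icc a b) μ
  · rw [← Ico_union_right hab, setIntegral_union (by simp) (measurableSet_singleton b)
      (hint.mono_set Ico_subset_Icc_self) (hint.mono_set (by simpa using hab)),
      integral_singleton, smul_eq_mul]
  · rw [integral_undef hint]
    exact add_nonneg (integral_nonneg fun z => hg z) (mul_nonneg measureReal_nonneg (hg b))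

theorem tendsto_measureReal_Ioc_nhdsGT (μ : Measure ℝ) [IsLocallyFiniteMeasure μ] (a : ℝ) :
    Tendsto (fun b => μ.real (Ioc a b)) (𝓝[>] a) (𝓝 0) := by
  have h := tendsto_measure_biInter_gt (μ := μ) (s := fun b => Ioc a b) (a := a)
    (fun _ _ => measurableSet_Ioc.nullMeasurableSet) (fun _ _ _ hij => Ioc_subset_Ioc_right hij)
    ⟨a + 1, by linarith, measure_Ioc_lt_top.ne⟩
  have hempty : ⋂ r > a, Ioc a r = ∅ := by
    refine eq_empty_of_forall_notMem fun t ht => ?_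
    have hat : a < t := (mem_iInter₂.1 ht (a + 1) (by linarith)).1
    linarith [(mem_iInter₂.1 ht ((a + t) / 2) (by linarith)).2]
  rw [hempty, measure_empty] at h
  exact (ENNReal.tendsto_toReal ENNReal.zero_ne_top).comp h

theorem setIntegral_le_measureReal_mul {α : Type*} [MeasurableSpace α] {μ : Measure α}
    {s t : Set α} {f : α → ℝ} {c : ℝ} (hs : MeasurableSet s) (ht : MeasurableSet t)
    (hμt : μ t ≠ ⊤) (hc : 0 ≤ c) (hf0 : ∀ z ∈ s, 0 ≤ f z)
    (hf : ∀ z ∈ s, f z ≤ t.indicator (fun _ => c) z) :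
    ∫ z in s, f z ∂μ ≤ μ.real t * c := by
  have hμts : μ.restrict s t ≠ ⊤ := by
    rw [Measure.restrict_apply ht]
    exact (measure_inter_lt_top_of_left_ne_top hμt).ne
  have hint : Integrable (t.indicator fun _ => c) (μ.restrict s) :=
    (integrableOn_const hμts).integrable_indicator ht
  calc ∫ z in s, f z ∂μ ≤ ∫ z in s, t.indicator (fun _ => c) z ∂μ :=
        integral_mono_of_nonneg (ae_restrict_of_forall_mem hs hf0) hint
          (ae_restrict_of_forall_mem hs hf)
    _ = μ.real (t ∩ s) * c := by
      rw [integral_indicator_const c ht, measureReal_restrict_apply ht, smul_eq_mul]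
    _ ≤ μ.real t * c := mul_le_mul_of_nonneg_right (measureReal_mono inter_subset_left hμt) hc

theorem mul_negPart_le_setIntegral_Ico {μ : Measure ℝ} {F : ℝ → ℝ} {a b c v w ε : ℝ}
    (hab : a ≤ b) (hc : 0 ≤ c) (hw : 0 ≤ w) (hv : v = c + ∫ z in Icc a b, F z ∂μ)
    (hFb : F b = w * v) (hε : ε ≤ 1 - w * μ.real {b}) :
    ε * v⁻ ≤ ∫ z in Ico a b, (F z)⁻ ∂μ := by
  have hv_le : v⁻ ≤ ∫ z in Icc a b, (F z)⁻ ∂μ :=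
    sup_le (by linarith [neg_integral_le_integral_negPart (μ.restrict (Icc a b)) F])
      (integral_nonneg fun z => negPart_nonneg _)
  have hsplit := setIntegral_Icc_le_Ico_add μ (fun z => negPart_nonneg (F z)) hab
  rw [hFb, negPart_mul_of_nonneg hw] at hsplit
  nlinarith [negPart_nonneg v]

section Volterra

variable {μ : Measure ℝ} {y T ε C : ℝ} {N : ℝ → ℝ} {g : ℝ → ℝ → ℝ}

theorem exists_gt_forall_le_eq_zero [IsLocallyFiniteMeasure μ] (hε : 0 < ε) (hC : 0 ≤ C)
    (hN : ∀ x ∈ Icc y T, 0 ≤ N x) (hNb : BddAbove (N '' Icc y T))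
    (hg0 : ∀ x ∈ Icc y T, ∀ z ∈ Ico y x, 0 ≤ g x z)
    (hgC : ∀ x ∈ Icc y T, ∀ z ∈ Ico y x, g x z ≤ C * N z)
    (hkey : ∀ x ∈ Icc y T, ε * N x ≤ ∫ z in Ico y x, g x z ∂μ)
    {s : ℝ} (hs : s ∈ Icc y T) (hzero : ∀ z ∈ Icc y s, N z = 0) :
    ∃ b > s, ∀ x ∈ Icc y T, x ≤ b → N x = 0 := by
  obtain ⟨b, hb, hsb⟩ : ∃ b, C * μ.real (Ioc s b) < ε / 2 ∧ s < b :=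
    ((((tendsto_measureReal_Ioc_nhdsGT μ s).const_mul C).eventually
      (gt_mem_nhds (by simpa using half_pos hε))).and self_mem_nhdsWithin).exists
  refine ⟨b, hsb, ?_⟩
  set J := Icc y T ∩ Iic b
  set S := sSup (N '' J)
  have hle_S : ∀ x ∈ J, N x ≤ S := fun x hx =>
    le_csSup (hNb.mono (image_mono inter_subset_left)) (mem_image_of_mem N hx)
  have hS0 : 0 ≤ S := (hN s hs).trans (hle_S s ⟨hs, hsb.le⟩)
  have hhalf : ∀ x ∈ J, N x ≤ S / 2 := by
    intro x hx
    rcases le_or_gt x s with hxs | hsx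
    · rw [hzero x ⟨hx.1.1, hxs⟩]
      positivity
    have hint : ∫ z in Ico y x, g x z ∂μ ≤ μ.real (Ioc s b) * (C * S) := by
      refine setIntegral_le_measureReal_mul measurableSet_Ico measurableSet_Ioc
        measure_Ioc_lt_top.ne (mul_nonneg hC hS0) (hg0 x hx.1) fun z hz => ?_
      rcases le_or_gt z s with hzs | hsz
      · have hgz := hgC x hx.1 z hz
        rw [hzero z ⟨hz.1, hzs⟩, mul_zero] at hgz
        exact hgz.trans (indicator_nonneg (fun _ _ => mul_nonneg hC hS0) z)
      · rw [indicator_of_mem (show z ∈ Ioc s b from ⟨hsz, hz.2.le.trans hx.2⟩)]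
        exact (hgC x hx.1 z hz).trans (mul_le_mul_of_nonneg_left
          (hle_S z ⟨⟨hz.1, hz.2.le.trans hx.1.2⟩, hz.2.le.trans hx.2⟩) hC)
    nlinarith [hkey x hx.1, mul_le_mul_of_nonneg_right hb.le hS0]
  have hS : S ≤ 0 := by
    have : S ≤ S / 2 := csSup_le ⟨N s, mem_image_of_mem N ⟨hs, hsb.le⟩⟩
      (forall_mem_image.2 hhalf)
    linarith
  exact fun x hxT hxb => le_antisymm ((hle_S x ⟨hxT, hxb⟩).trans hS) (hN x hxT)

theorem eqOn_zero_of_mul_le_setIntegral_Ico [IsLocallyFiniteMeasure μ] (hε : 0 < ε)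
    (hC : 0 ≤ C) (hN : ∀ x ∈ Icc y T, 0 ≤ N x) (hNb : BddAbove (N '' Icc y T))
    (hg0 : ∀ x ∈ Icc y T, ∀ z ∈ Ico y x, 0 ≤ g x z)
    (hgC : ∀ x ∈ Icc y T, ∀ z ∈ Ico y x, g x z ≤ C * N z)
    (hkey : ∀ x ∈ Icc y T, ε * N x ≤ ∫ z in Ico y x, g x z ∂μ) :
    ∀ x ∈ Icc y T, N x = 0 := by
  intro x₀ hx₀
  by_contra hNx₀
  set B := {x ∈ Icc y T | N x ≠ 0}
  have hBne : B.Nonempty := ⟨x₀, hx₀, hNx₀⟩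
  have hBbdd : BddBelow B := ⟨y, fun x hx => hx.1.1⟩
  set s := sInf B
  have hs : s ∈ Icc y T :=
    ⟨le_csInf hBne fun x hx => hx.1.1, (csInf_le hBbdd ⟨hx₀, hNx₀⟩).trans hx₀.2⟩
  have hbefore : ∀ z ∈ Ico y s, N z = 0 := fun z hz => by_contra fun hNz =>
    (csInf_le hBbdd ⟨⟨hz.1, hz.2.le.trans hs.2⟩, hNz⟩).not_gt hz.2
  have hNs : N s = 0 := by
    have hint : ∫ z in Ico y s, g s z ∂μ = 0 := setIntegral_eq_zero_of_forall_eq_zero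
      fun z hz => le_antisymm (by simpa [hbefore z hz] using hgC s hs z hz) (hg0 s hs z hz)
    nlinarith [hkey s hs, hN s hs]
  have hupto : ∀ z ∈ Icc y s, N z = 0 := fun z hz =>
    hz.2.eq_or_lt.elim (fun h => h ▸ hNs) fun h => hbefore z ⟨hz.1, h⟩
  obtain ⟨b, hsb, hb⟩ := exists_gt_forall_le_eq_zero hε hC hN hNb hg0 hgC hkey hs hupto
  obtain ⟨t, ⟨htT, hNt⟩, htb⟩ := exists_lt_of_csInf_lt hBne hsb
  exact hNt (hb t htT htb.le)

end Volterra

theorem volterra_nonneg_general (W : ℝ → ℝ)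
    (hWnn : ∀ x, 0 ≤ W x) (hWmono : Monotone W)
    (y T : ℝ) (h : ℝ → ℝ)
    (hhnn : ∀ u ∈ Set.Icc (0 : ℝ) (T - y), 0 ≤ h u)
    (μ : Measure ℝ) [IsLocallyFiniteMeasure μ]
    (ε : ℝ) (hε : 0 < ε)
    (hatom : ∀ x ∈ Set.Icc y T, ε ≤ 1 - W 0 * (μ {x}).toReal)
    (H : ℝ → ℝ)
    (hb : ∃ M, ∀ x ∈ Set.Icc y T, |H x| ≤ M)
    (he : ∀ x ∈ Set.Icc y T,
      H x = h (x - y) + ∫ z in Set.Icc y x, W (x - z) * H z ∂μ) :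
    ∀ x ∈ Set.Icc y T, 0 ≤ H x := by
  have hkey : ∀ x ∈ Icc y T, ε * (H x)⁻ ≤ ∫ z in Ico y x, (W (x - z) * H z)⁻ ∂μ :=
    fun x hx => mul_negPart_le_setIntegral_Ico hx.1
      (hhnn _ ⟨sub_nonneg.2 hx.1, sub_le_sub_right hx.2 y⟩) (hWnn 0) (he x hx)
      (by rw [sub_self]) (hatom x hx)
  obtain ⟨M, hM⟩ := hb
  have hNb : BddAbove ((fun z => (H z)⁻) '' Icc y T) :=
    ⟨M, forall_mem_image.2 fun x hx => (sup_le (neg_le_abs _) (abs_nonneg _)).trans (hM x hx)⟩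
  have hgC : ∀ x ∈ Icc y T, ∀ z ∈ Ico y x, (W (x - z) * H z)⁻ ≤ W (T - y) * (H z)⁻ :=
    fun x hx z hz => by
      rw [negPart_mul_of_nonneg (hWnn _)]
      exact mul_le_mul_of_nonneg_right (hWmono (by linarith [hx.2, hz.1])) (negPart_nonneg _)
  intro x hx
  exact negPart_eq_zero.1 <| eqOn_zero_of_mul_le_setIntegral_Ico hε (hWnn _)
    (fun _ _ => negPart_nonneg _) hNb (fun _ _ _ _ => negPart_nonneg _) hgC hkey x hx

theorem volterra_nonneg (W : ℝ → ℝ) (hWc : ContinuousOn W (Set.Ici 0))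
    (hWneg : ∀ x < (0 : ℝ), W x = 0) (hWnn : ∀ x, 0 ≤ W x) (hWmono : Monotone W)
    (y T : ℝ) (hyT : y ≤ T) (h : ℝ → ℝ)
    (hhb : ∃ M, ∀ u ∈ Set.Icc (0 : ℝ) (T - y), |h u| ≤ M)
    (hhnn : ∀ u ∈ Set.Icc (0 : ℝ) (T - y), 0 ≤ h u)
    (μ : Measure ℝ) [IsLocallyFiniteMeasure μ]
    (ε : ℝ) (hε : 0 < ε)
    (hatom : ∀ x ∈ Set.Icc y T, ε ≤ 1 - W 0 * (μ {x}).toReal)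
    (H : ℝ → ℝ)
    (hb : ∃ M, ∀ x ∈ Set.Icc y T, |H x| ≤ M)
    (he : ∀ x ∈ Set.Icc y T,
      H x = h (x - y) + ∫ z in Set.Icc y x, W (x - z) * H z ∂μ) :
    ∀ x ∈ Set.Icc y T, 0 ≤ H x :=
  volterra_nonneg_general W hWnn hWmono y T h hhnn μ ε hε hatom H hb he
end

section
/- Let W : ℝ → [0,∞) be nondecreasing, vanishing on (-∞,0), let ν be a nonnegative Radon measure, and let W_ν(·,·) be the solution to W_ν(x,y) = W(x-y) + ∫_{[y,x]} W(x-u) W_ν(u,y) ν(du), which is nonnegative. Then for fixed y the map x ↦ W_ν(x,y) is nondecreasing on [y,∞), and for fixed x the map y ↦ W_ν(x,y) is nonincreasing on (-∞,x]. -/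
/-!
Since a Bochner integral is `0` when its integrand is not integrable, the first point is that a
nonnegative solution `f` makes every integrand `u ↦ W (x - u) * f u` integrable on `[a, x]`. The
points where this fails form an up-set on which `f = b`. Below its infimum `f` is monotone (compare
the two integrals) and bounded (a Gronwall estimate over a left neighbourhood of small
`ν`-measure), so `f` is integrable up to any point of the up-set, which then cannot belong to it.
Monotonicity in `x` follows.

For `y₁ ≤ y₂` the difference `W_ν(·, y₁) - W_ν(·, y₂)` solves the equation started at `y₂` with a
nonnegative forcing term, and such solutions are nonnegative: at the first point `c` where
negativity could begin, the atom `ν {c}` is less than `1 / W 0` (read off from the equation of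
`W_ν(·, c)` at `c`), and just to the right of `c` the kernel is a contraction, the interval having
small `ν`-measure.
-/

open MeasureTheory Set Filter Topology

theorem MeasureTheory.Integrable.mul_of_le_of_nonneg {α : Type*} [MeasurableSpace α]
    {μ : Measure α} {φ ψ f : α → ℝ} (hφ : Measurable φ) (hψ : Measurable ψ)
    (hφ0 : ∀ u, 0 ≤ φ u) (hφψ : ∀ u, φ u ≤ ψ u) (h : Integrable (fun u => ψ u * f u) μ) :
    Integrable (fun u => φ u * f u) μ := by
  -- where `ψ u = 0` also `φ u = 0`, so `x / 0 = 0` keeps the factorisation valid there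
  have hfactor : ∀ u, φ u / ψ u * (ψ u * f u) = φ u * f u := by
    intro u
    rcases eq_or_ne (ψ u) 0 with h0 | h0
    · simp [le_antisymm (h0 ▸ hφψ u) (hφ0 u)]
    · field_simp
  refine (h.bdd_mul (c := 1) (hφ.div hψ).aestronglyMeasurable (ae_of_all _ fun u => ?_)).congr
    (ae_of_all _ hfactor)
  have hψ0 : 0 ≤ ψ u := (hφ0 u).trans (hφψ u)
  rw [Pi.div_apply, Real.norm_of_nonneg (div_nonneg (hφ0 u) hψ0)]
  exact div_le_one_of_le₀ (hφψ u) hψ0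

theorem integrableOn_Ico_of_monotoneOn {μ : Measure ℝ} [IsLocallyFiniteMeasure μ] {f : ℝ → ℝ}
    {a c M : ℝ} (hf : MonotoneOn f (Ico a c)) (hM : ∀ t ∈ Ico a c, f t ≤ M) :
    IntegrableOn f (Ico a c) μ := by
  refine ⟨(aemeasurable_restrict_of_monotoneOn measurableSet_Ico hf).aestronglyMeasurable,
    HasFiniteIntegral.restrict_of_bounded (C := max |M| |f a|) measure_Ico_lt_top ?_⟩
  filter_upwards [ae_restrict_mem measurableSet_Ico] with t ht
  rw [Real.norm_eq_abs, max_comm]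
  exact abs_le_max_abs_abs (hf ⟨le_rfl, ht.1.trans_lt ht.2⟩ ht ht.1) (hM t ht)

theorem tendsto_measureReal_ball_diff_singleton (ν : Measure ℝ) [IsLocallyFiniteMeasure ν]
    (c : ℝ) : Tendsto (fun δ => ν.real (Metric.ball c δ \ {c})) (𝓝[>] 0) (𝓝 0) := by
  have h := tendsto_measure_biInter_gt (μ := ν) (s := fun δ => Metric.ball c δ \ {c}) (a := 0)
    (fun _ _ => (measurableSet_ball.diff (measurableSet_singleton c)).nullMeasurableSet)
    (fun _ _ _ hij => sdiff_subset_sdiff_left (Metric.ball_subset_ball hij))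
    ⟨1, one_pos, ((measure_mono sdiff_subset).trans_lt measure_ball_lt_top).ne⟩
  have hempty : ⋂ r > (0 : ℝ), Metric.ball c r \ {c} = ∅ := by
    refine eq_empty_of_forall_notMem fun u hu => ?_
    simp only [mem_iInter, Set.mem_sdiff, Metric.mem_ball, mem_singleton_iff] at hu
    have hne : u ≠ c := (hu 1 one_pos).2
    exact (lt_irrefl _) (hu (dist u c) (dist_pos.2 hne)).1
  rw [hempty, measure_empty] at h
  exact (ENNReal.tendsto_toReal ENNReal.zero_ne_top).comp h

theorem nonneg_of_neg_le_of_halving {α : Type*} {s : Set α} {g : α → ℝ} {M : ℝ}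
    (hM : ∀ z ∈ s, -M ≤ g z)
    (hhalf : ∀ m, 0 ≤ m → (∀ z ∈ s, -m ≤ g z) → ∀ z ∈ s, -(m / 2) ≤ g z) :
    ∀ z ∈ s, 0 ≤ g z := by
  have hpow : ∀ n : ℕ, ∀ z ∈ s, -(max M 0 * (1 / 2) ^ n) ≤ g z := by
    intro n
    induction n with
    | zero => simpa using fun z hz => (neg_le_neg (le_max_left M 0)).trans (hM z hz)
    | succ n ih =>
      convert hhalf _ (by positivity) ih using 3
      ring
  intro z hz
  have hlim : Tendsto (fun n : ℕ => -(max M 0 * (1 / 2) ^ n)) atTop (𝓝 0) := by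
    simpa using ((tendsto_pow_atTop_nhds_zero_of_lt_one (by norm_num : (0 : ℝ) ≤ 1 / 2)
      (by norm_num)).const_mul (max M 0)).neg
  exact le_of_tendsto' hlim fun n => hpow n z hz

theorem Monotone.measurable_comp_const_sub {W : ℝ → ℝ} (hW : Monotone W) (x : ℝ) :
    Measurable fun u => W (x - u) :=
  hW.measurable.comp (measurable_const.sub measurable_id)

theorem integrableOn_kernel_mul_of_le {W f : ℝ → ℝ} (hW : Monotone W) (hW0 : ∀ x, 0 ≤ W x)
    {ν : Measure ℝ} {s : Set ℝ} {x₁ x₂ : ℝ} (h : x₁ ≤ x₂)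
    (hint : IntegrableOn (fun u => W (x₂ - u) * f u) s ν) :
    IntegrableOn (fun u => W (x₁ - u) * f u) s ν :=
  Integrable.mul_of_le_of_nonneg (hW.measurable_comp_const_sub x₁)
    (hW.measurable_comp_const_sub x₂) (fun _ => hW0 _)
    (fun _ => hW (sub_le_sub_right h _)) hint

/-- The integral is a Bochner integral: it is `0` wherever the integrand is not integrable. -/
def IsVolterraSolution (W : ℝ → ℝ) (ν : Measure ℝ) (a : ℝ) (b f : ℝ → ℝ) : Prop :=
  ∀ x, a ≤ x → f x = b x + ∫ u in Icc a x, W (x - u) * f u ∂ν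

namespace IsVolterraSolution

variable {W : ℝ → ℝ} {ν : Measure ℝ} {a : ℝ} {b f : ℝ → ℝ}

theorem le_of_integrableOn (hW : Monotone W) (hW0 : ∀ x, 0 ≤ W x) (hb : Monotone b)
    (hsol : IsVolterraSolution W ν a b f) (hf : ∀ x, 0 ≤ f x) {x₁ x₂ : ℝ} (h₁ : a ≤ x₁)
    (h₁₂ : x₁ ≤ x₂) (hint : IntegrableOn (fun u => W (x₂ - u) * f u) (Icc a x₂) ν) :
    f x₁ ≤ f x₂ := by
  have hint₁ : IntegrableOn (fun u => W (x₂ - u) * f u) (Icc a x₁) ν :=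
    hint.mono_set (Icc_subset_Icc_right h₁₂)
  rw [hsol x₁ h₁, hsol x₂ (h₁.trans h₁₂)]
  gcongr ?_ + ?_
  · exact hb h₁₂
  calc ∫ u in Icc a x₁, W (x₁ - u) * f u ∂ν
      ≤ ∫ u in Icc a x₁, W (x₂ - u) * f u ∂ν :=
        setIntegral_mono_on (integrableOn_kernel_mul_of_le hW hW0 h₁₂ hint₁) hint₁
          measurableSet_Icc fun u _ => mul_le_mul_of_nonneg_right (hW (by linarith)) (hf u)
    _ ≤ ∫ u in Icc a x₂, W (x₂ - u) * f u ∂ν :=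
        setIntegral_mono_set hint (ae_of_all _ fun u => mul_nonneg (hW0 _) (hf u))
          (Icc_subset_Icc_right h₁₂).eventuallyLE

theorem monotoneOn_of_integrableOn (hW : Monotone W) (hW0 : ∀ x, 0 ≤ W x) (hb : Monotone b)
    (hsol : IsVolterraSolution W ν a b f) (hf : ∀ x, 0 ≤ f x) {s : Set ℝ} (hs : s ⊆ Ici a)
    (hgood : ∀ t ∈ s, IntegrableOn (fun u => W (t - u) * f u) (Icc a t) ν) :
    MonotoneOn f s := fun _ h₁ t₂ h₂ h₁₂ =>
  hsol.le_of_integrableOn hW hW0 hb hf (hs h₁) h₁₂ (hgood t₂ h₂)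

theorem exists_bound_Ico (hW : Monotone W) (hW0 : ∀ x, 0 ≤ W x) [IsLocallyFiniteMeasure ν]
    (hb : Monotone b) (hsol : IsVolterraSolution W ν a b f) (hf : ∀ x, 0 ≤ f x) {c : ℝ}
    (hgood : ∀ t ∈ Ico a c, IntegrableOn (fun u => W (t - u) * f u) (Icc a t) ν) :
    ∃ M, ∀ t ∈ Ico a c, f t ≤ M := by
  have hmono : MonotoneOn f (Ico a c) :=
    hsol.monotoneOn_of_integrableOn hW hW0 hb hf (fun _ ht => ht.1) hgood
  rcases lt_or_ge a c with hac | hca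
  swap
  · exact ⟨0, fun t ht => absurd (ht.1.trans_lt ht.2) (not_lt.2 hca)⟩
  set C := W (c - a)
  obtain ⟨δ, hsmall, hδ⟩ : ∃ δ, C * ν.real (Metric.ball c δ \ {c}) < 1 / 2 ∧ 0 < δ := by
    have h := (tendsto_measureReal_ball_diff_singleton ν c).const_mul C
    rw [mul_zero] at h
    exact ((h.eventually (gt_mem_nhds one_half_pos)).and self_mem_nhdsWithin).exists
  set t₀ := max a (c - δ)
  have ht₀ : t₀ ∈ Ico a c := ⟨le_max_left _ _, max_lt hac (by linarith)⟩
  set A := ∫ u in Icc a t₀, f u ∂ν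
  -- for `t > t₀`, `f t ≤ b c + C * (A + ν.real (ball c δ \ {c}) * f t)` and `C * ν.real … < 1/2`
  refine ⟨max (f t₀) (2 * (b c + C * A)), fun t ht => ?_⟩
  rcases le_or_gt t t₀ with htt₀ | ht₀t
  · exact (hmono ht ht₀ htt₀).trans (le_max_left _ _)
  refine le_max_of_le_right ?_
  have hfint : IntegrableOn f (Icc a t) ν :=
    (hmono.mono (Icc_subset_Ico_right ht.2)).integrableOn_isCompact isCompact_Icc
  have htail : ∫ u in Ioc t₀ t, f u ∂ν ≤ ν.real (Metric.ball c δ \ {c}) * f t := by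
    calc ∫ u in Ioc t₀ t, f u ∂ν ≤ ∫ _ in Ioc t₀ t, f t ∂ν :=
          setIntegral_mono_on (hfint.mono_set (Ioc_subset_Icc_self.trans
            (Icc_subset_Icc_left ht₀.1))) (integrableOn_const measure_Ioc_lt_top.ne)
            measurableSet_Ioc fun u hu => hmono ⟨ht₀.1.trans hu.1.le, hu.2.trans_lt ht.2⟩ ht hu.2
      _ = ν.real (Ioc t₀ t) * f t := by rw [setIntegral_const, smul_eq_mul]
      _ ≤ ν.real (Metric.ball c δ \ {c}) * f t := by
        refine mul_le_mul_of_nonneg_right (measureReal_mono (fun u hu => ?_)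
          ((measure_mono sdiff_subset).trans_lt measure_ball_lt_top).ne) (hf t)
        have : c - δ < u := (le_max_right a (c - δ)).trans_lt hu.1
        refine ⟨?_, (hu.2.trans_lt ht.2).ne⟩
        rw [Metric.mem_ball, Real.dist_eq, abs_lt]
        constructor <;> linarith [hu.2, ht.2]
  have hsplit : ∫ u in Icc a t, f u ∂ν = A + ∫ u in Ioc t₀ t, f u ∂ν := by
    rw [← Icc_union_Ioc_eq_Icc ht₀.1 ht₀t.le, setIntegral_union
      (disjoint_left.2 fun _ hu hu' => (not_lt.2 hu.2) hu'.1)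
      measurableSet_Ioc (hfint.mono_set (Icc_subset_Icc_right ht₀t.le))
      (hfint.mono_set (Ioc_subset_Icc_self.trans (Icc_subset_Icc_left ht₀.1)))]
  have hrenewal : f t ≤ b c + C * ∫ u in Icc a t, f u ∂ν := by
    rw [hsol t ht.1, ← integral_const_mul]
    gcongr ?_ + ?_
    · exact hb ht.2.le
    exact setIntegral_mono_on (hgood t ht) (hfint.const_mul C) measurableSet_Icc
      fun u hu => mul_le_mul_of_nonneg_right (hW (by linarith [hu.1, ht.2])) (hf u)
  have hC0 : 0 ≤ C := hW0 _
  nlinarith [mul_le_mul_of_nonneg_right hsmall.le (hf t), mul_le_mul_of_nonneg_left htail hC0]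

theorem integrableOn_kernel_mul (hW : Monotone W) (hW0 : ∀ x, 0 ≤ W x)
    [IsLocallyFiniteMeasure ν] (hb : Monotone b) (hsol : IsVolterraSolution W ν a b f)
    (hf : ∀ x, 0 ≤ f x) (x : ℝ) : IntegrableOn (fun u => W (x - u) * f u) (Icc a x) ν := by
  set B := {t | ¬ IntegrableOn (fun u => W (t - u) * f u) (Icc a t) ν}
  by_contra hx
  change x ∈ B at hx
  have hBa : ∀ t ∈ B, a ≤ t := fun t ht => by
    by_contra! h
    exact ht (by rw [Icc_eq_empty h.not_ge]; exact integrableOn_empty)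
  have hBup : ∀ t ∈ B, ∀ t', t ≤ t' → t' ∈ B := fun t ht t' h ht' =>
    ht (integrableOn_kernel_mul_of_le hW hW0 h (ht'.mono_set (Icc_subset_Icc_right h)))
  have hbdd : BddBelow B := ⟨a, hBa⟩
  set c := sInf B
  have hac : a ≤ c := le_csInf ⟨x, hx⟩ hBa
  have hcx : c ≤ x := csInf_le hbdd hx
  have hgood : ∀ t ∈ Ico a c, IntegrableOn (fun u => W (t - u) * f u) (Icc a t) ν :=
    fun t ht => not_not.1 (notMem_of_lt_csInf ht.2 hbdd)
  -- beyond `c` the integral is a junk `0`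
  have hbad : ∀ t, c < t → f t = b t := by
    intro t ht
    obtain ⟨t', ht', ht't⟩ := exists_lt_of_csInf_lt ⟨x, hx⟩ ht
    rw [hsol t (hac.trans ht.le), integral_undef (hBup t' ht' t ht't.le), add_zero]
  obtain ⟨M, hM⟩ := hsol.exists_bound_Ico hW hW0 hb hf hgood
  have hmono : MonotoneOn f (Ico a c) :=
    hsol.monotoneOn_of_integrableOn hW hW0 hb hf (fun _ ht => ht.1) hgood
  have hright : IntegrableOn f (Ioc c x) ν :=
    (((hb.monotoneOn _).integrableOn_isCompact isCompact_Icc).mono_set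
      Ioc_subset_Icc_self).congr_fun (fun t ht => (hbad t ht.1).symm) measurableSet_Ioc
  have hfint : IntegrableOn f (Icc a x) ν := by
    have hc : IntegrableOn f {c} ν := integrableOn_singleton (hx := measure_singleton_lt_top)
    refine (((integrableOn_Ico_of_monotoneOn hmono hM).union hc).union hright).mono_set
      fun t ht => ?_
    rcases lt_trichotomy t c with htc | rfl | htc
    · exact Or.inl (Or.inl ⟨ht.1, htc⟩)
    · exact Or.inl (Or.inr rfl)
    · exact Or.inr ⟨htc, ht.2⟩
  refine hx (hfint.bdd_mul (c := W (x - a))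
    (hW.measurable_comp_const_sub x).aestronglyMeasurable ?_)
  filter_upwards [ae_restrict_mem measurableSet_Icc] with u hu
  rw [Real.norm_of_nonneg (hW0 _)]
  exact hW (by linarith [hu.1])

theorem monotoneOn (hW : Monotone W) (hW0 : ∀ x, 0 ≤ W x) [IsLocallyFiniteMeasure ν]
    (hb : Monotone b) (hsol : IsVolterraSolution W ν a b f) (hf : ∀ x, 0 ≤ f x) :
    MonotoneOn f (Ici a) :=
  hsol.monotoneOn_of_integrableOn hW hW0 hb hf subset_rfl fun t _ =>
    hsol.integrableOn_kernel_mul hW hW0 hb hf t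

theorem measureReal_singleton_mul_lt_one (hW0 : 0 ≤ W 0)
    (hsol : IsVolterraSolution W ν a (fun x => W (x - a)) f) (hf : 0 ≤ f a) :
    ν.real {a} * W 0 < 1 := by
  have h := hsol a le_rfl
  simp only [Icc_self, integral_singleton, smul_eq_mul, sub_self] at h
  by_contra! h1
  have hW : W 0 = 0 := le_antisymm (by nlinarith [mul_le_mul_of_nonneg_right h1 hf]) hW0
  rw [hW, mul_zero] at h1
  norm_num at h1

theorem sub {a₁ a₂ : ℝ} {b₁ b₂ f₁ f₂ : ℝ → ℝ} (h₁ : IsVolterraSolution W ν a₁ b₁ f₁)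
    (h₂ : IsVolterraSolution W ν a₂ b₂ f₂) (ha : a₁ ≤ a₂)
    (hint₁ : ∀ z, IntegrableOn (fun u => W (z - u) * f₁ u) (Icc a₁ z) ν)
    (hint₂ : ∀ z, IntegrableOn (fun u => W (z - u) * f₂ u) (Icc a₂ z) ν) :
    IsVolterraSolution W ν a₂
      (fun z => b₁ z - b₂ z + ∫ u in Ico a₁ a₂, W (z - u) * f₁ u ∂ν) (f₁ - f₂) := by
  intro z hz
  have hsplit : ∫ u in Icc a₁ z, W (z - u) * f₁ u ∂ν =
      ∫ u in Ico a₁ a₂, W (z - u) * f₁ u ∂ν + ∫ u in Icc a₂ z, W (z - u) * f₁ u ∂ν := by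
    have hint := hint₁ z
    rw [← Ico_union_Icc_eq_Icc ha hz] at hint ⊢
    exact setIntegral_union (disjoint_left.2 fun _ hu hu' => (not_le.2 hu.2) hu'.1)
      measurableSet_Icc hint.left_of_union hint.right_of_union
  have hdiff : ∫ u in Icc a₂ z, W (z - u) * (f₁ - f₂) u ∂ν =
      ∫ u in Icc a₂ z, W (z - u) * f₁ u ∂ν - ∫ u in Icc a₂ z, W (z - u) * f₂ u ∂ν := by
    simp only [Pi.sub_apply, mul_sub]
    exact integral_sub ((hint₁ z).mono_set (Icc_subset_Icc_left ha)) (hint₂ z)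
  rw [Pi.sub_apply, h₁ z (ha.trans hz), h₂ z hz, hdiff, hsplit]
  ring

variable {H : ℝ → ℝ}

theorem nonneg_of_nonneg_Ico (hW0 : ∀ x, 0 ≤ W x) (hsol : IsVolterraSolution W ν a b H)
    {c : ℝ} (hac : a ≤ c) (hbc : 0 ≤ b c)
    (hint : IntegrableOn (fun u => W (c - u) * H u) (Icc a c) ν)
    (hatom : ν.real {c} * W 0 < 1) (hH : ∀ z ∈ Ico a c, 0 ≤ H z) : 0 ≤ H c := by
  have hsplit : ∫ u in Icc a c, W (c - u) * H u ∂ν =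
      ∫ u in Ico a c, W (c - u) * H u ∂ν + ν.real {c} * (W 0 * H c) := by
    rw [← Ico_union_right hac] at hint ⊢
    rw [setIntegral_union (disjoint_singleton_right.2 fun h => lt_irrefl c h.2)
      (measurableSet_singleton c) hint.left_of_union hint.right_of_union, integral_singleton,
      sub_self, smul_eq_mul]
  have hIco : 0 ≤ ∫ u in Ico a c, W (c - u) * H u ∂ν :=
    setIntegral_nonneg measurableSet_Ico fun u hu => mul_nonneg (hW0 _) (hH u hu)
  have h := hsol c hac
  rw [hsplit] at h
  by_contra! hneg
  nlinarith [mul_pos (sub_pos.2 hatom) (neg_pos.2 hneg)]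

theorem exists_nonneg_Ioo (hW : Monotone W) (hW0 : ∀ x, 0 ≤ W x) [IsLocallyFiniteMeasure ν]
    (hsol : IsVolterraSolution W ν a b H) (hb : ∀ z, a ≤ z → 0 ≤ b z)
    (hint : ∀ z, IntegrableOn (fun u => W (z - u) * H u) (Icc a z) ν) {c M : ℝ}
    (hac : a ≤ c) (hH : ∀ z ∈ Icc a c, 0 ≤ H z) (hM : ∀ z ∈ Ioo c (c + 1), -M ≤ H z) :
    ∃ δ > 0, ∀ z ∈ Ioo c (c + δ), 0 ≤ H z := by
  obtain ⟨δ, hsmall, hδ0, hδ1⟩ :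
      ∃ δ, W 1 * ν.real (Metric.ball c δ \ {c}) < 1 / 2 ∧ 0 < δ ∧ δ ≤ 1 := by
    have h := (tendsto_measureReal_ball_diff_singleton ν c).const_mul (W 1)
    rw [mul_zero] at h
    exact ((h.eventually (gt_mem_nhds one_half_pos)).and
      (Ioc_mem_nhdsGT (zero_lt_one' ℝ))).exists
  refine ⟨δ, hδ0, nonneg_of_neg_le_of_halving (M := M)
    (fun z hz => hM z ⟨hz.1, by linarith [hz.2]⟩) fun m hm0 hm z hz => ?_⟩
  have htail : -(m / 2) ≤ ∫ u in Ioc c z, W (z - u) * H u ∂ν := by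
    have hmeas : ν.real (Ioc c z) ≤ ν.real (Metric.ball c δ \ {c}) := by
      refine measureReal_mono (fun u hu => ⟨?_, hu.1.ne'⟩)
        ((measure_mono sdiff_subset).trans_lt measure_ball_lt_top).ne
      rw [Metric.mem_ball, Real.dist_eq, abs_lt]
      constructor <;> linarith [hu.1, hu.2, hz.2]
    have hWν : W 1 * ν.real (Ioc c z) ≤ 1 / 2 :=
      (mul_le_mul_of_nonneg_left hmeas (hW0 1)).trans hsmall.le
    calc -(m / 2) ≤ -(W 1 * m) * ν.real (Ioc c z) := by
          nlinarith [mul_le_mul_of_nonneg_right hWν hm0]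
      _ ≤ ∫ u in Ioc c z, W (z - u) * H u ∂ν := by
        refine setIntegral_ge_of_const_le_real measurableSet_Ioc measure_Ioc_lt_top.ne
          (fun u hu => ?_) ((hint z).mono_set fun u hu => ⟨by linarith [hu.1], hu.2⟩)
        have hWle : W (z - u) ≤ W 1 := hW (by linarith [hu.1, hz.2])
        have hHu : -m ≤ H u := hm u ⟨hu.1, hu.2.trans_lt hz.2⟩
        nlinarith [hW0 (z - u)]
  have hsplit : ∫ u in Icc a z, W (z - u) * H u ∂ν =
      ∫ u in Icc a c, W (z - u) * H u ∂ν + ∫ u in Ioc c z, W (z - u) * H u ∂ν := by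
    have hint' := hint z
    rw [← Icc_union_Ioc_eq_Icc hac hz.1.le] at hint' ⊢
    exact setIntegral_union (disjoint_left.2 fun _ hu hu' => (not_lt.2 hu.2) hu'.1)
      measurableSet_Ioc hint'.left_of_union hint'.right_of_union
  have hhead : 0 ≤ ∫ u in Icc a c, W (z - u) * H u ∂ν :=
    setIntegral_nonneg measurableSet_Icc fun u hu => mul_nonneg (hW0 _) (hH u hu)
  rw [hsol z (hac.trans hz.1.le), hsplit]
  linarith [hb z (hac.trans hz.1.le)]

theorem nonneg (hW : Monotone W) (hW0 : ∀ x, 0 ≤ W x) [IsLocallyFiniteMeasure ν]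
    (hsol : IsVolterraSolution W ν a b H) (hb : ∀ z, a ≤ z → 0 ≤ b z)
    (hint : ∀ z, IntegrableOn (fun u => W (z - u) * H u) (Icc a z) ν)
    (hbdd : ∀ T, ∃ M, ∀ z ∈ Icc a T, -M ≤ H z) (hatom : ∀ z, ν.real {z} * W 0 < 1)
    {z : ℝ} (hz : a ≤ z) : 0 ≤ H z := by
  set N := {t | a ≤ t ∧ H t < 0}
  by_contra! hneg
  have hN : N.Nonempty := ⟨z, hz, hneg⟩
  have hbdd' : BddBelow N := ⟨a, fun _ h => h.1⟩
  set c := sInf N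
  have hac : a ≤ c := le_csInf hN fun _ h => h.1
  have hIco : ∀ t ∈ Ico a c, 0 ≤ H t := fun t ht => by
    by_contra! h
    exact notMem_of_lt_csInf ht.2 hbdd' ⟨ht.1, h⟩
  have hc : 0 ≤ H c := hsol.nonneg_of_nonneg_Ico hW0 hac (hb c hac) (hint c) (hatom c) hIco
  have hIcc : ∀ t ∈ Icc a c, 0 ≤ H t := fun t ht =>
    ht.2.eq_or_lt.elim (fun h => h ▸ hc) fun h => hIco t ⟨ht.1, h⟩
  obtain ⟨M, hM⟩ := hbdd (c + 1)
  obtain ⟨δ, hδ, hIoo⟩ := hsol.exists_nonneg_Ioo hW hW0 hb hint hac hIcc (M := M)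
    fun t ht => hM t ⟨by linarith [ht.1], ht.2.le⟩
  have : c + δ ≤ c := le_csInf hN fun t ht => by
    by_contra! h
    rcases le_or_gt t c with htc | htc
    · exact (hIcc t ⟨ht.1, htc⟩).not_gt ht.2
    · exact (hIoo t ⟨htc, h⟩).not_gt ht.2
  linarith

end IsVolterraSolution

theorem lemma_mon_general (W : ℝ → ℝ) (hWmono : Monotone W)
    (hWnn : ∀ x, 0 ≤ W x)
    (ν : Measure ℝ) [IsLocallyFiniteMeasure ν]
    (Wnu : ℝ → ℝ → ℝ)
    (heq : ∀ x y, Wnu x y = W (x - y) + ∫ u in Set.Icc y x, W (x - u) * Wnu u y ∂ν)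
    (hWnunn : ∀ x y, 0 ≤ Wnu x y) :
    (∀ y x₁ x₂, y ≤ x₁ → x₁ ≤ x₂ → Wnu x₁ y ≤ Wnu x₂ y) ∧
      (∀ x y₁ y₂, y₁ ≤ y₂ → y₂ ≤ x → Wnu x y₂ ≤ Wnu x y₁) := by
  have hsol : ∀ y, IsVolterraSolution W ν y (fun x => W (x - y)) (Wnu · y) :=
    fun y x _ => heq x y
  have hshift : ∀ y, Monotone fun x => W (x - y) := fun y _ _ h => hWmono (sub_le_sub_right h y)
  have hint : ∀ y x, IntegrableOn (fun u => W (x - u) * Wnu u y) (Icc y x) ν := fun y =>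
    (hsol y).integrableOn_kernel_mul hWmono hWnn (hshift y) (hWnunn · y)
  have hmono : ∀ y, MonotoneOn (Wnu · y) (Ici y) := fun y =>
    (hsol y).monotoneOn hWmono hWnn (hshift y) (hWnunn · y)
  refine ⟨fun y x₁ x₂ h₁ h₁₂ => hmono y h₁ (h₁.trans h₁₂) h₁₂, fun x y₁ y₂ h₁₂ h₂ => ?_⟩
  have hdiff := (hsol y₁).sub (hsol y₂) h₁₂ (hint y₁) (hint y₂)
  refine sub_nonneg.1 (hdiff.nonneg hWmono hWnn (fun z hz => ?_) (fun z => ?_) (fun T => ?_)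
    (fun z => (hsol z).measureReal_singleton_mul_lt_one (hWnn 0) (hWnunn z z)) h₂)
  · exact add_nonneg (sub_nonneg.2 (hWmono (by linarith)))
      (setIntegral_nonneg measurableSet_Ico fun u _ => mul_nonneg (hWnn _) (hWnunn u y₁))
  · simpa only [Pi.sub_def, mul_sub] using
      ((hint y₁ z).mono_set (Icc_subset_Icc_left h₁₂)).sub (hint y₂ z)
  · refine ⟨Wnu T y₂, fun z hz => ?_⟩
    rw [Pi.sub_apply]
    linarith [hmono y₂ hz.1 (hz.1.trans hz.2) hz.2, hWnunn z y₁]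

theorem lemma_mon (W : ℝ → ℝ) (hWmono : Monotone W) (hWneg : ∀ x < (0 : ℝ), W x = 0)
    (hWnn : ∀ x, 0 ≤ W x)
    (ν : Measure ℝ) [IsLocallyFiniteMeasure ν]
    (Wnu : ℝ → ℝ → ℝ)
    (heq : ∀ x y, Wnu x y = W (x - y) + ∫ u in Set.Icc y x, W (x - u) * Wnu u y ∂ν)
    (hWnunn : ∀ x y, 0 ≤ Wnu x y)
    (huniq : ∀ y (G : ℝ → ℝ),
      (∀ x, G x = W (x - y) + ∫ u in Set.Icc y x, W (x - u) * G u ∂ν) →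
      (∀ T, ∃ M, ∀ x ∈ Set.Icc y T, |G x| ≤ M) → ∀ x, G x = Wnu x y) :
    (∀ y x₁ x₂, y ≤ x₁ → x₁ ≤ x₂ → Wnu x₁ y ≤ Wnu x₂ y) ∧
      (∀ x y₁ y₂, y₁ ≤ y₂ → y₂ ≤ x → Wnu x y₂ ≤ Wnu x y₁) :=
  lemma_mon_general W hWmono hWnn ν Wnu heq hWnunn
end

section
/- Let W^{(q)} be nonnegative, vanishing on (-∞,0), with W^{(q)}(0) = 1/d for some d > 0. Define recursively W_k(x,y) = W_{k-1}(x,y) + d(e^{p_k/d}-1) W^{(q)}(x-a_k) W_{k-1}(a_k,y) for k ≥ 2, with W₁(x,y) = W^{(q)}(x-y) + d(e^{p₁/d}-1) W^{(q)}(x-a₁) W^{(q)}(a₁-y), where a₁ < a₂ < ... < a_n and pᵢ > 0. Then W_n satisfies W_n(x,y) = W^{(q)}(x-y) + ∫_{[y,x]} W^{(q)}(x-z) W_n(z,y) ν_n(dz) for all x, y ∈ ℝ, where ν_n = Σ_{i=1}^n d(1-e^{-pᵢ/d}) δ_{aᵢ}. -/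
/-!
Setting `W₀(x, y) = W(x - y)`, the recursion reads `W_k = W_{k-1} + c_k W(· - a_k) W_{k-1}(a_k, ·)`
with `c_k = d(e^{p_k/d} - 1)`. Against the atomic measure `ν_n` the Volterra integral is the finite
sum `∑ b_i W(x - a_i) W_n(a_i, y)` with `b_i = d(1 - e^{-p_i/d})`: atoms outside `[y, x]` contribute
nothing because `W(x - z)` vanishes for `z > x` and `W_n(z, y)` vanishes for `z < y`. The sum
identity follows by induction on `k`: adding the atom `a_k` does not change `W_k(a_i, y)` for
`i < k`, since `W(a_i - a_k) = 0`, and the new term matches because `b_k (1 + c_k W(0)) = c_k`.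
-/

open MeasureTheory Finset

theorem integral_finset_sum_smul_dirac {α ι E : Type*} [MeasurableSpace α]
    [MeasurableSingletonClass α] [NormedAddCommGroup E] [NormedSpace ℝ E] [CompleteSpace E]
    (s : Finset ι) (w : ι → ENNReal) (hw : ∀ i ∈ s, w i ≠ ⊤) (a : ι → α) (f : α → E) :
    ∫ z, f z ∂(∑ i ∈ s, w i • Measure.dirac (a i)) = ∑ i ∈ s, (w i).toReal • f (a i) := by
  rw [integral_finsetSum_measure fun i hi =>
    (integrable_dirac enorm_lt_top).smul_measure (hw i hi)]
  simp only [integral_smul_measure, integral_dirac f]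

section ScaleRecursion

variable {W : ℝ → ℝ} {a b c : ℕ → ℝ} {V : ℕ → ℝ → ℝ → ℝ} {n : ℕ}

theorem scaleRec_eq_zero_of_lt (hWneg : ∀ x < (0 : ℝ), W x = 0)
    (hV0 : ∀ x y, V 0 x y = W (x - y))
    (hV : ∀ k < n, ∀ x y,
      V (k + 1) x y = V k x y + c (k + 1) * W (x - a (k + 1)) * V k (a (k + 1)) y)
    {k : ℕ} (hk : k ≤ n) {x y : ℝ} (hxy : x < y) : V k x y = 0 := by
  induction k generalizing x with
  | zero => rw [hV0, hWneg _ (by linarith)]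
  | succ k ih =>
    rw [hV k hk, ih (by omega) hxy]
    rcases le_or_gt (a (k + 1)) x with h | h
    · rw [ih (by omega) (h.trans_lt hxy)]; ring
    · rw [hWneg _ (by linarith)]; ring

theorem scaleRec_succ_apply_of_lt (hWneg : ∀ x < (0 : ℝ), W x = 0)
    (hV : ∀ k < n, ∀ x y,
      V (k + 1) x y = V k x y + c (k + 1) * W (x - a (k + 1)) * V k (a (k + 1)) y)
    {k : ℕ} (hk : k < n) {x : ℝ} (hx : x < a (k + 1)) (y : ℝ) :
    V (k + 1) x y = V k x y := by
  rw [hV k hk, hWneg _ (by linarith)]; ring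

theorem scaleRec_eq_add_sum (hWneg : ∀ x < (0 : ℝ), W x = 0)
    (hbc : ∀ i, b i * (1 + c i * W 0) = c i)
    (hamono : ∀ i j, 1 ≤ i → i < j → j ≤ n → a i < a j)
    (hV0 : ∀ x y, V 0 x y = W (x - y))
    (hV : ∀ k < n, ∀ x y,
      V (k + 1) x y = V k x y + c (k + 1) * W (x - a (k + 1)) * V k (a (k + 1)) y)
    {k : ℕ} (hk : k ≤ n) (x y : ℝ) :
    V k x y = W (x - y) + ∑ i ∈ Icc 1 k, b i * (W (x - a i) * V k (a i) y) := by
  induction k generalizing x with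
  | zero => simp [hV0]
  | succ k ih =>
    have hold : ∀ i ∈ Icc 1 k, V (k + 1) (a i) y = V k (a i) y := fun i hi =>
      scaleRec_succ_apply_of_lt hWneg hV hk
        (hamono i (k + 1) (mem_Icc.1 hi).1 (Nat.lt_succ_of_le (mem_Icc.1 hi).2) hk) y
    have hnew : V (k + 1) (a (k + 1)) y = (1 + c (k + 1) * W 0) * V k (a (k + 1)) y := by
      rw [hV k hk, sub_self]; ring
    rw [sum_Icc_succ_top (by omega), sum_congr rfl fun i hi => by rw [hold i hi], hnew,
      hV k hk, ih (by omega)]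
    linear_combination -(W (x - a (k + 1)) * V k (a (k + 1)) y) * hbc (k + 1)

end ScaleRecursion

theorem finite_mixture_scale_function_general (W : ℝ → ℝ) (d : ℝ) (hd : 0 < d)
    (hWneg : ∀ x < (0 : ℝ), W x = 0) (hW0 : W 0 = 1 / d)
    (n : ℕ) (hn : 1 ≤ n) (a p : ℕ → ℝ) (hp : ∀ i, 0 < p i)
    (hamono : ∀ i j, 1 ≤ i → i < j → j ≤ n → a i < a j)
    (Wk : ℕ → ℝ → ℝ → ℝ)
    (hbase : ∀ x y, Wk 1 x y =
      W (x - y) + d * (Real.exp (p 1 / d) - 1) * W (x - a 1) * W (a 1 - y))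
    (hrec : ∀ k, 2 ≤ k → k ≤ n → ∀ x y, Wk k x y =
      Wk (k - 1) x y + d * (Real.exp (p k / d) - 1) * W (x - a k) * Wk (k - 1) (a k) y) :
    ∀ x y : ℝ, Wk n x y = W (x - y) +
      ∫ z in Set.Icc y x, W (x - z) * Wk n z y
        ∂(∑ i ∈ Finset.Icc 1 n,
            ENNReal.ofReal (d * (1 - Real.exp (-(p i) / d))) • Measure.dirac (a i)) := by
  intro x y
  set b : ℕ → ℝ := fun i => d * (1 - Real.exp (-(p i) / d))
  set c : ℕ → ℝ := fun i => d * (Real.exp (p i / d) - 1)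
  set V : ℕ → ℝ → ℝ → ℝ := fun k => if k = 0 then fun x y => W (x - y) else Wk k
  have hV : ∀ k < n, ∀ x y,
      V (k + 1) x y = V k x y + c (k + 1) * W (x - a (k + 1)) * V k (a (k + 1)) y := by
    rintro (_ | k) hk x y
    · exact hbase x y
    · simpa [V] using hrec (k + 2) (by omega) hk x y
  have hVn : V n = Wk n := if_neg (by omega)
  have hb : ∀ i, 0 ≤ b i := fun i =>
    mul_nonneg hd.le <| sub_nonneg.2 <| Real.exp_le_one_iff.2 <|
      div_nonpos_of_nonpos_of_nonneg (neg_nonpos.2 (hp i).le) hd.le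
  have hbc : ∀ i, b i * (1 + c i * W 0) = c i := fun i => by
    simp only [b, c, hW0, neg_div, Real.exp_neg]
    field_simp
    ring
  rw [← hVn, setIntegral_eq_integral_of_forall_compl_eq_zero, integral_finset_sum_smul_dirac]
  · rw [scaleRec_eq_add_sum hWneg hbc hamono (fun _ _ => rfl) hV le_rfl x y]
    refine congrArg _ (sum_congr rfl fun i _ => ?_)
    rw [smul_eq_mul, ENNReal.toReal_ofReal (hb i)]
  · exact fun _ _ => ENNReal.ofReal_ne_top
  · intro z hz
    rcases not_and_or.1 hz with hyz | hzx
    · rw [scaleRec_eq_zero_of_lt hWneg (fun _ _ => rfl) hV le_rfl (not_le.1 hyz), mul_zero]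
    · rw [hWneg _ (by linarith [not_le.1 hzx]), zero_mul]

theorem finite_mixture_scale_function (W : ℝ → ℝ) (d : ℝ) (hd : 0 < d)
    (hWnn : ∀ x, 0 ≤ W x) (hWneg : ∀ x < (0 : ℝ), W x = 0) (hW0 : W 0 = 1 / d)
    (n : ℕ) (hn : 1 ≤ n) (a p : ℕ → ℝ) (hp : ∀ i, 0 < p i)
    (hamono : ∀ i j, 1 ≤ i → i < j → j ≤ n → a i < a j)
    (Wk : ℕ → ℝ → ℝ → ℝ)
    (hbase : ∀ x y, Wk 1 x y =
      W (x - y) + d * (Real.exp (p 1 / d) - 1) * W (x - a 1) * W (a 1 - y))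
    (hrec : ∀ k, 2 ≤ k → k ≤ n → ∀ x y, Wk k x y =
      Wk (k - 1) x y + d * (Real.exp (p k / d) - 1) * W (x - a k) * Wk (k - 1) (a k) y) :
    ∀ x y : ℝ, Wk n x y = W (x - y) +
      ∫ z in Set.Icc y x, W (x - z) * Wk n z y
        ∂(∑ i ∈ Finset.Icc 1 n,
            ENNReal.ofReal (d * (1 - Real.exp (-(p i) / d))) • Measure.dirac (a i)) :=
  finite_mixture_scale_function_general W d hd hWneg hW0 n hn a p hp hamono Wk hbase hrec
end

section
/- Let (Fₙ)ₙ be a nonincreasing sequence of continuous functions on a compact interval [y,T] defined by Fₙ(x) = ∫_{(y,x)} e^{-sₙ(x-z)} W(x-z) μ(dz), where μ is a finite diffuse measure on [y,T], W is bounded nonnegative on [0, T-y], and sₙ ↑ ∞. Then Fₙ(x) → 0 for every x ∈ [y,T] and, by Dini's theorem, the convergence is uniform on [y,T]; hence for any ε > 0 there exists s₀ > 0 with sup_{x∈[y,T]} ∫_{(y,x)} e^{-s₀(x-z)} W(x-z) μ(dz) < ε. -/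
/-!
Split the integral over `(y, x)` at `x - δ`. On `(y, x - δ]` the tilt contributes at most
`e^{-rδ}`, so that part is at most `M e^{-rδ} μ([y, T])`; the rest is at most
`M μ([y, T] ∩ (x - δ, x + δ))`. Since `μ` restricted to `[y, T]` is finite and diffuse, the
measure of a small ball is small, and by compactness (a Lebesgue number) uniformly in `x`.
So the integrals tend to `0` uniformly as the tilt `r → ∞` through the reals, and in particular
along any `sₙ → ∞`.
-/

open MeasureTheory Set Filter Topology Metric
open scoped ENNReal

section DiffuseMeasure

variable {α : Type*} [MetricSpace α] [MeasurableSpace α] [OpensMeasurableSpace α]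
  (μ : Measure α) [IsFiniteMeasure μ] [NullSingletonClass μ]

theorem exists_pos_measure_ball_lt (x : α) {ε : ℝ≥0∞} (hε : 0 < ε) :
    ∃ δ > 0, μ (ball x δ) < ε := by
  have h : Tendsto (fun r => μ (ball x r)) (𝓝[>] 0) (𝓝 0) := by
    simpa [thickening_singleton] using
      tendsto_measure_thickening_of_isClosed (μ := μ) ⟨1, one_pos, measure_ne_top μ _⟩
        (isClosed_singleton (x := x))
  obtain ⟨δ, hδ, hδpos⟩ := ((h.eventually_lt_const hε).and self_mem_nhdsWithin).exists
  exact ⟨δ, hδpos, hδ⟩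

theorem IsCompact.exists_pos_forall_measure_ball_lt {K : Set α} (hK : IsCompact K)
    {ε : ℝ≥0∞} (hε : 0 < ε) : ∃ δ > 0, ∀ x ∈ K, μ (ball x δ) < ε := by
  choose r hr hμr using fun x => exists_pos_measure_ball_lt μ x hε
  obtain ⟨δ, hδ, hcover⟩ := lebesgue_number_lemma_of_metric hK (c := fun x => ball x (r x))
    (fun _ => isOpen_ball) fun x _ => mem_iUnion.2 ⟨x, mem_ball_self (hr x)⟩
  refine ⟨δ, hδ, fun x hx => ?_⟩
  obtain ⟨c, hc⟩ := hcover x hx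
  exact (measure_mono hc).trans_lt (hμr c)

end DiffuseMeasure

theorem setIntegral_le_add_measureReal {α : Type*} [MeasurableSpace α] {ν : Measure α}
    [IsFiniteMeasure ν] {S B : Set α} (hS : MeasurableSet S) (hB : MeasurableSet B)
    {f : α → ℝ} {a b : ℝ} (ha : 0 ≤ a) (hb : 0 ≤ b) (hf : ∀ z ∈ S, 0 ≤ f z)
    (hfb : ∀ z ∈ S, f z ≤ b) (hfa : ∀ z ∈ S, z ∉ B → f z ≤ a) :
    ∫ z in S, f z ∂ν ≤ a * ν.real univ + b * ν.real B := by
  set g : α → ℝ := fun z => a + B.indicator (fun _ => b) z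
  have hg0 : 0 ≤ g := fun z => add_nonneg ha (indicator_nonneg (fun _ _ => hb) z)
  have hgi : Integrable g ν := (integrable_const a).add ((integrable_const b).indicator hB)
  have hfg : ∀ z ∈ S, f z ≤ g z := by
    intro z hz
    by_cases hzB : z ∈ B
    · simp only [g, indicator_of_mem hzB]
      linarith [hfb z hz]
    · simpa [g, indicator_of_notMem hzB] using hfa z hz hzB
  calc ∫ z in S, f z ∂ν ≤ ∫ z in S, g z ∂ν :=
        integral_mono_of_nonneg ((ae_restrict_iff' hS).2 (Eventually.of_forall hf))
          hgi.integrableOn ((ae_restrict_iff' hS).2 (Eventually.of_forall hfg))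
    _ ≤ ∫ z, g z ∂ν := setIntegral_le_integral hgi (Eventually.of_forall hg0)
    _ = a * ν.real univ + b * ν.real B := by
        rw [integral_add (integrable_const a) ((integrable_const b).indicator hB),
          integral_const, integral_indicator_const b hB, smul_eq_mul, smul_eq_mul, mul_comm a,
          mul_comm b]

noncomputable def tiltedVolterra (μ : Measure ℝ) (W : ℝ → ℝ) (y r x : ℝ) : ℝ :=
  ∫ z in Ioo y x, Real.exp (-r * (x - z)) * W (x - z) ∂μ

section TiltedVolterra

variable {μ : Measure ℝ} {W : ℝ → ℝ} {y T M : ℝ}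

theorem tiltedVolterra_nonneg (hW : ∀ u ∈ Icc (0 : ℝ) (T - y), 0 ≤ W u ∧ W u ≤ M) (r : ℝ)
    {x : ℝ} (hx : x ∈ Icc y T) : 0 ≤ tiltedVolterra μ W y r x :=
  setIntegral_nonneg measurableSet_Ioo fun z hz =>
    mul_nonneg (Real.exp_pos _).le (hW (x - z) ⟨by linarith [hz.2], by linarith [hz.1, hx.2]⟩).1

theorem tiltedVolterra_le (hfin : μ (Icc y T) ≠ ∞)
    (hW : ∀ u ∈ Icc (0 : ℝ) (T - y), 0 ≤ W u ∧ W u ≤ M) {r : ℝ} (hr : 0 ≤ r) (δ : ℝ)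
    {x : ℝ} (hx : x ∈ Icc y T) :
    tiltedVolterra μ W y r x ≤
      M * Real.exp (-r * δ) * μ.real (Icc y T) + M * (μ.restrict (Icc y T)).real (ball x δ) := by
  have := isFiniteMeasure_restrict.2 hfin
  have hWx : ∀ z ∈ Ioo y x, 0 ≤ W (x - z) ∧ W (x - z) ≤ M := fun z hz =>
    hW (x - z) ⟨by linarith [hz.2], by linarith [hz.1, hx.2]⟩
  have hM : 0 ≤ M := by
    have := hW 0 ⟨le_rfl, sub_nonneg.2 (hx.1.trans hx.2)⟩
    exact this.1.trans this.2
  have hsub : Ioo y x ⊆ Icc y T := fun z hz => ⟨hz.1.le, hz.2.le.trans hx.2⟩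
  rw [tiltedVolterra, ← Measure.restrict_restrict_of_subset hsub,
    ← measureReal_restrict_apply_univ]
  refine setIntegral_le_add_measureReal measurableSet_Ioo measurableSet_ball
    (mul_nonneg hM (Real.exp_pos _).le) hM
    (fun z hz => mul_nonneg (Real.exp_pos _).le (hWx z hz).1) (fun z hz => ?_) (fun z hz hzB => ?_)
  · have : Real.exp (-r * (x - z)) ≤ 1 := Real.exp_le_one_iff.2 (by nlinarith [hz.2])
    nlinarith [hWx z hz]
  · have hδ : δ ≤ x - z := by
      by_contra h
      exact hzB (by rw [Real.ball_eq_Ioo]; constructor <;> linarith [hz.2])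
    have : Real.exp (-r * (x - z)) ≤ Real.exp (-r * δ) := Real.exp_le_exp.2 (by nlinarith)
    nlinarith [hWx z hz, Real.exp_pos (-r * (x - z))]

theorem tendstoUniformlyOn_tiltedVolterra [NullSingletonClass μ] (hyT : y ≤ T)
    (hfin : μ (Icc y T) ≠ ∞) (hW : ∀ u ∈ Icc (0 : ℝ) (T - y), 0 ≤ W u ∧ W u ≤ M) :
    TendstoUniformlyOn (tiltedVolterra μ W y) 0 atTop (Icc y T) := by
  have := isFiniteMeasure_restrict.2 hfin
  have hM : 0 ≤ M := by
    have := hW 0 ⟨le_rfl, sub_nonneg.2 hyT⟩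
    exact this.1.trans this.2
  rw [Metric.tendstoUniformlyOn_iff]
  intro ε hε
  set η := ε / (2 * (M + 1))
  obtain ⟨δ, hδ, hball⟩ := isCompact_Icc.exists_pos_forall_measure_ball_lt
    (μ.restrict (Icc y T)) (ENNReal.ofReal_pos.2 (show 0 < η by positivity))
  have htail : Tendsto (fun r => M * Real.exp (-r * δ) * μ.real (Icc y T)) atTop (𝓝 0) := by
    have := Real.tendsto_exp_neg_atTop_nhds_zero.comp (tendsto_id.atTop_mul_const hδ)
    simpa [Function.comp_def, neg_mul] using (this.const_mul M).mul_const (μ.real (Icc y T))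
  filter_upwards [htail.eventually_lt_const (half_pos hε), eventually_ge_atTop 0]
    with r hr hr0 x hx
  have hnear : M * (μ.restrict (Icc y T)).real (ball x δ) ≤ ε / 2 :=
    calc M * (μ.restrict (Icc y T)).real (ball x δ) ≤ (M + 1) * η :=
          mul_le_mul (by linarith) (ENNReal.toReal_lt_of_lt_ofReal (hball x hx)).le
            measureReal_nonneg (by linarith)
      _ = ε / 2 := by simp only [η]; field_simp
  rw [Pi.zero_apply, dist_zero_left, Real.norm_of_nonneg (tiltedVolterra_nonneg hW r hx)]
  linarith [tiltedVolterra_le hfin hW hr0 δ hx]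

end TiltedVolterra

theorem dini_tilting_general (y T M : ℝ) (hyT : y ≤ T)
    (μ : Measure ℝ) (hfin : μ (Set.Icc y T) ≠ ⊤) (hdiff : ∀ x : ℝ, μ {x} = 0)
    (W : ℝ → ℝ)
    (hW : ∀ u ∈ Set.Icc (0 : ℝ) (T - y), 0 ≤ W u ∧ W u ≤ M)
    (s : ℕ → ℝ)
    (hstop : Filter.Tendsto s Filter.atTop Filter.atTop) :
    (∀ x ∈ Set.Icc y T,
      Filter.Tendsto
        (fun n => ∫ z in Set.Ioo y x, Real.exp (-(s n) * (x - z)) * W (x - z) ∂μ)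
        Filter.atTop (nhds 0)) ∧
    TendstoUniformlyOn
      (fun n x => ∫ z in Set.Ioo y x, Real.exp (-(s n) * (x - z)) * W (x - z) ∂μ)
      (fun _ => 0) Filter.atTop (Set.Icc y T) ∧
    (∀ ε > (0 : ℝ), ∃ s₀ > (0 : ℝ), ∀ x ∈ Set.Icc y T,
      (∫ z in Set.Ioo y x, Real.exp (-s₀ * (x - z)) * W (x - z) ∂μ) < ε) := by
  have : NullSingletonClass μ := ⟨hdiff⟩
  have hunif := tendstoUniformlyOn_tiltedVolterra hyT hfin hW
  have hunif_s : TendstoUniformlyOn (fun n => tiltedVolterra μ W y (s n)) 0 atTop (Icc y T) :=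
    fun u hu => hstop.eventually (hunif u hu)
  refine ⟨fun x hx => hunif_s.tendsto_at hx, hunif_s, fun ε hε => ?_⟩
  obtain ⟨r, hr, hr0⟩ := ((Metric.tendstoUniformlyOn_iff.1 hunif ε hε).and
    (eventually_gt_atTop 0)).exists
  refine ⟨r, hr0, fun x hx => ?_⟩
  have hdist := hr x hx
  rwa [Pi.zero_apply, dist_zero_left, Real.norm_of_nonneg (tiltedVolterra_nonneg hW r hx)]
    at hdist

theorem dini_tilting (y T M : ℝ) (hyT : y ≤ T)
    (μ : Measure ℝ) (hfin : μ (Set.Icc y T) ≠ ⊤) (hdiff : ∀ x : ℝ, μ {x} = 0)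
    (W : ℝ → ℝ) (hWm : Measurable W)
    (hW : ∀ u ∈ Set.Icc (0 : ℝ) (T - y), 0 ≤ W u ∧ W u ≤ M)
    (s : ℕ → ℝ) (hs0 : ∀ n, 0 < s n) (hsmono : Monotone s)
    (hstop : Filter.Tendsto s Filter.atTop Filter.atTop) :
    (∀ x ∈ Set.Icc y T,
      Filter.Tendsto
        (fun n => ∫ z in Set.Ioo y x, Real.exp (-(s n) * (x - z)) * W (x - z) ∂μ)
        Filter.atTop (nhds 0)) ∧
    TendstoUniformlyOn
      (fun n x => ∫ z in Set.Ioo y x, Real.exp (-(s n) * (x - z)) * W (x - z) ∂μ)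
      (fun _ => 0) Filter.atTop (Set.Icc y T) ∧
    (∀ ε > (0 : ℝ), ∃ s₀ > (0 : ℝ), ∀ x ∈ Set.Icc y T,
      (∫ z in Set.Ioo y x, Real.exp (-s₀ * (x - z)) * W (x - z) ∂μ) < ε) :=
  dini_tilting_general y T M hyT μ hfin hdiff W hW s hstop
end
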